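/- Let 𝒜 be an a.d.-family. The following are equivalent: (1) ℙ_𝒜 is σ-centered; (2) for every 0 < ε < 1 the unit sphere of (X_𝒜, ‖·‖∞) is the union of countably many sets 𝒳_n such that ‖x − y‖∞ ≤ 1+ε for all x, y ∈ 𝒳_n and all n ∈ ℕ. -/

import Mathlib

open Set Filter Cardinal

noncomputable section

/-- The Banach space `ℓ∞` of bounded real sequences with the sup norm. -/
abbrev Linfty : Type := lp (fun _ : ℕ => ℝ) ⊤

/-- An a.d.-family: an uncountable family of infinite subsets of `ℕ` which is
pairwise almost disjoint. -/
def ADFamily (𝒜 : Set (Set ℕ)) : Prop :=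
  ¬𝒜.Countable ∧ (∀ A ∈ 𝒜, A.Infinite) ∧
    ∀ A ∈ 𝒜, ∀ B ∈ 𝒜, A ≠ B → (A ∩ B).Finite

/-- A maximal a.d.-family. -/
def MaximalADFamily (𝒜 : Set (Set ℕ)) : Prop :=
  ADFamily 𝒜 ∧ ∀ X : Set ℕ, X.Infinite → ∃ A ∈ 𝒜, (X ∩ A).Infinite

/-- `A =* B` : the symmetric difference is finite. -/
def eqStar (A B : Set ℕ) : Prop := (symmDiff A B).Finite

/-- Finite subfamilies `a`, `b` of `𝒜` represent the pair `p`. -/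
def Represents (𝒜 : Set (Set ℕ)) (p : Set ℕ × Set ℕ) (a b : Finset (Set ℕ)) : Prop :=
  ↑a ⊆ 𝒜 ∧ ↑b ⊆ 𝒜 ∧ eqStar p.1 (⋃ A ∈ a, A) ∧ eqStar p.2 (⋃ B ∈ b, B)

/-- `p` is a condition of the splitting partial order `ℙ_𝒜`. -/
def SplitCond (𝒜 : Set (Set ℕ)) (p : Set ℕ × Set ℕ) : Prop :=
  p.1 ∩ p.2 = ∅ ∧ ∃ a b : Finset (Set ℕ), Represents 𝒜 p a b

/-- `Extends p q` means `p ≤ q` in `ℙ_𝒜`. -/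
def Extends (p q : Set ℕ × Set ℕ) : Prop := q.1 ⊆ p.1 ∧ q.2 ⊆ p.2

/-- Compatibility in `ℙ_𝒜`. -/
def Compat (𝒜 : Set (Set ℕ)) (p q : Set ℕ × Set ℕ) : Prop :=
  ∃ r, SplitCond 𝒜 r ∧ Extends r p ∧ Extends r q

/-- An antichain of `ℙ_𝒜`: a set of pairwise incompatible conditions. -/
def SplitAntichain (𝒜 : Set (Set ℕ)) (P : Set (Set ℕ × Set ℕ)) : Prop :=
  (∀ p ∈ P, SplitCond 𝒜 p) ∧ ∀ p ∈ P, ∀ q ∈ P, p ≠ q → ¬Compat 𝒜 p q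

/-- `ℙ_𝒜` satisfies the countable chain condition. -/
def SplitCCC (𝒜 : Set (Set ℕ)) : Prop :=
  ∀ P : Set (Set ℕ × Set ℕ), SplitAntichain 𝒜 P → P.Countable

/-- A centered subset of `ℙ_𝒜`: every finite subset has a common lower bound in `ℙ_𝒜`. -/
def SplitCentered (𝒜 : Set (Set ℕ)) (P : Set (Set ℕ × Set ℕ)) : Prop :=
  ∀ F : Finset (Set ℕ × Set ℕ), ↑F ⊆ P →
    ∃ r, SplitCond 𝒜 r ∧ ∀ p ∈ F, Extends r p

/-- `ℙ_𝒜` is σ-centered. -/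
def SplitSigmaCentered (𝒜 : Set (Set ℕ)) : Prop :=
  ∃ P : ℕ → Set (Set ℕ × Set ℕ),
    (⋃ n, P n) = {p | SplitCond 𝒜 p} ∧ ∀ n, SplitCentered 𝒜 (P n)

/-- `ℙ_𝒜` has precaliber `κ`. -/
def SplitPrecaliber (𝒜 : Set (Set ℕ)) (κ : Cardinal) : Prop :=
  ∀ P : Set (Set ℕ × Set ℕ), (∀ p ∈ P, SplitCond 𝒜 p) → #P = κ →
    ∃ Q ⊆ P, #Q = κ ∧ SplitCentered 𝒜 Q

/-- Two conditions are essentially distinct if their (uniquely determined)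
representing finite subfamilies differ on both coordinates. -/
def EssDistinct (𝒜 : Set (Set ℕ)) (p q : Set ℕ × Set ℕ) : Prop :=
  ∀ ap bp aq bq : Finset (Set ℕ), Represents 𝒜 p ap bp → Represents 𝒜 q aq bq →
    ap ≠ aq ∧ bp ≠ bq

/-- An antiramsey a.d.-family. -/
def Antiramsey (𝒜 : Set (Set ℕ)) : Prop :=
  ADFamily 𝒜 ∧
  ∀ P : Set (Set ℕ × Set ℕ), (∀ p ∈ P, SplitCond 𝒜 p) → ¬P.Countable →
    (∀ p ∈ P, ∀ q ∈ P, p ≠ q → EssDistinct 𝒜 p q) →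
    (∃ p ∈ P, ∃ q ∈ P, p ≠ q ∧ Compat 𝒜 p q) ∧ (∃ p ∈ P, ∃ q ∈ P, ¬Compat 𝒜 p q)

/-- The first uncountable ordinal. -/
def omega1 : Ordinal.{0} := (Cardinal.aleph 1).ord

/-- A Luzin family. -/
def IsLuzinFamily (𝒜 : Set (Set ℕ)) : Prop :=
  ADFamily 𝒜 ∧ ∃ A : Ordinal.{0} → Set ℕ,
    (∀ ξ < omega1, A ξ ∈ 𝒜) ∧
    (∀ B ∈ 𝒜, ∃ ξ < omega1, A ξ = B) ∧
    (∀ ξ < omega1, ∀ η < omega1, ξ ≠ η → A ξ ≠ A η) ∧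
    ∀ η < omega1, ∀ m : ℕ, {ξ : Ordinal | ξ < η ∧ sSup (A ξ ∩ A η) = m}.Finite

/-- `(B i : i < n)` forms an `n`-Luzin gap. -/
def IsNLuzinGap (n : ℕ) (B : Fin n → Ordinal.{0} → Set ℕ) : Prop :=
  (∀ i : Fin n, ∀ α < omega1, ∀ β < omega1, α ≠ β → B i α ≠ B i β) ∧
  (∀ i j : Fin n, i ≠ j → ∀ α < omega1, ∀ β < omega1, B i α ≠ B j β) ∧
  ∃ m : ℕ,
    (∀ i j : Fin n, i < j → ∀ α < omega1, B i α ∩ B j α ⊆ Set.Iio m) ∧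
    (∀ α < omega1, ∀ β < omega1, α ≠ β →
      ¬(⋃ (i : Fin n) (j : Fin n) (_ : i ≠ j), B i α ∩ B j β) ⊆ Set.Iio m)

/-- `𝒜` contains an `n`-Luzin gap. -/
def ContainsNLuzinGap (𝒜 : Set (Set ℕ)) (n : ℕ) : Prop :=
  ∃ B : Fin n → Ordinal.{0} → Set ℕ,
    (∀ i : Fin n, ∀ α < omega1, B i α ∈ 𝒜) ∧ IsNLuzinGap n B

-- The characteristic function of `A ⊆ ℕ` as an element of `ℓ∞`.
open Classical in
def indicatorLinfty (A : Set ℕ) : Linfty :=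
  ⟨fun n => if n ∈ A then (1 : ℝ) else 0, by
    apply memℓp_infty
    refine ⟨1, ?_⟩
    rintro x ⟨n, rfl⟩
    dsimp only
    split <;> simp⟩

/-- The subset `c₀` of `ℓ∞`. -/
def c0Set : Set Linfty := {f | Tendsto (fun n => f n) atTop (nhds 0)}

/-- The Johnson–Lindenstrauss space `X_𝒜`: the closed linear span of
`c₀ ∪ {1_A : A ∈ 𝒜}` in `ℓ∞`, as a (closed) submodule. -/
def XA (𝒜 : Set (Set ℕ)) : Submodule ℝ Linfty :=
  (Submodule.span ℝ (c0Set ∪ indicatorLinfty '' 𝒜)).topologicalClosure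

/-- The norm `‖·‖_{∞,2}` on `ℓ∞`. -/
def norm12 (f : Linfty) : ℝ :=
  ‖f‖ + Real.sqrt (∑' n : ℕ, (f n) ^ 2 / 2 ^ (n + 1))

/-- The unit sphere of `(X_𝒜, ‖·‖∞)`. -/
def sphereInf (𝒜 : Set (Set ℕ)) : Set Linfty :=
  {f : Linfty | f ∈ XA 𝒜 ∧ ‖f‖ = 1}

/-- The unit sphere of `(X_𝒜, ‖·‖_{∞,2})`. -/
def sphere12 (𝒜 : Set (Set ℕ)) : Set Linfty :=
  {f : Linfty | f ∈ XA 𝒜 ∧ norm12 f = 1}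

/-- The Open Coloring Axiom. -/
def OCA : Prop :=
  ∀ (X : Type) [MetricSpace X], TopologicalSpace.SeparableSpace X →
    ∀ K : Set (X × X), IsOpen K → (∀ x y : X, (x, y) ∈ K → (y, x) ∈ K) →
      (∃ Y : Set X, ¬Y.Countable ∧ ∀ x ∈ Y, ∀ y ∈ Y, x ≠ y → (x, y) ∈ K) ∨
      (∃ C : ℕ → Set X, (⋃ n, C n) = Set.univ ∧
        ∀ n, ∀ x ∈ C n, ∀ y ∈ C n, x ≠ y → (x, y) ∉ K)

/-- An `ℝ`-embeddable a.d.-family. -/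
def REmbeddable (𝒜 : Set (Set ℕ)) : Prop :=
  ∃ (f : ℕ → ℚ) (r : Set ℕ → ℝ), Function.Injective f ∧
    (∀ A ∈ 𝒜, Irrational (r A) ∧
      ∀ ε : ℝ, 0 < ε → {n ∈ A | ε ≤ |(f n : ℝ) - r A|}.Finite) ∧
    (∀ A ∈ 𝒜, ∀ B ∈ 𝒜, A ≠ B → r A ≠ r B)

/-- The Continuum Hypothesis. -/
def CH : Prop := (Cardinal.continuum : Cardinal.{0}) = Cardinal.aleph 1

end

/-! A condition `p = (A, B)` gives the point `1_A - 1_B` of the unit sphere, and two such points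
are at distance `2` as soon as the first part of one meets the second part of the other. So a
cover of the sphere by pieces of diameter `< 2` sorts the conditions into countably many classes
of pairwise compatible ones.

Conversely, every `x ∈ X_𝒜` is within `δ / 4` of some `c + ∑ w_B 1_B` with `c ∈ c₀`, hence, off a
finite set, `x > δ` only on `A` and `x < -δ` only on `B` for some condition `(A, B)`. Code `x` by
the centered piece containing that condition together with rational approximations of `x` on the
finite set: there are countably many codes, and two unit vectors with the same code are at
distance `≤ 1 + δ`, since compatibility forbids `x > δ` and `y < -δ` at the same coordinate. -/

open Classical

lemma Linfty.abs_apply_le_norm (f : Linfty) (m : ℕ) : |f m| ≤ ‖f‖ :=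
  lp.norm_apply_le_norm ENNReal.top_ne_zero f m

lemma Linfty.norm_le_of_forall_abs_apply_le {f : Linfty} {C : ℝ} (hC : 0 ≤ C)
    (h : ∀ m, |f m| ≤ C) : ‖f‖ ≤ C :=
  lp.norm_le_of_forall_le hC h

lemma indicatorLinfty_apply (A : Set ℕ) (m : ℕ) :
    indicatorLinfty A m = if m ∈ A then 1 else 0 :=
  rfl

noncomputable def c0Submodule : Submodule ℝ Linfty where
  carrier := c0Set
  add_mem' {f g} hf hg := by
    simpa [c0Set] using (hf.add hg : Tendsto (fun n => f n + g n) atTop (nhds (0 + 0)))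
  zero_mem' := tendsto_const_nhds
  smul_mem' r f hf := by
    simpa [c0Set] using (hf.const_mul r : Tendsto (fun n => r * f n) atTop (nhds (r * 0)))

section ClosedSpan

variable {𝒜 : Set (Set ℕ)}

lemma mem_c0Set_of_eq_zero_off_finite {f : Linfty} {E : Set ℕ} (hE : E.Finite)
    (h : ∀ m ∉ E, f m = 0) : f ∈ c0Set := by
  have hev : ∀ᶠ m in atTop, f m = 0 := by
    rw [← Nat.cofinite_eq_atTop]
    exact hE.eventually_cofinite_notMem.mono h
  exact tendsto_const_nhds.congr' (hev.mono fun m hm => hm.symm)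

lemma mem_XA_of_mem_c0Set {f : Linfty} (hf : f ∈ c0Set) : f ∈ XA 𝒜 :=
  Submodule.le_topologicalClosure _ (Submodule.subset_span (Or.inl hf))

lemma indicatorLinfty_mem_XA_of_mem {A : Set ℕ} (hA : A ∈ 𝒜) : indicatorLinfty A ∈ XA 𝒜 :=
  Submodule.le_topologicalClosure _ (Submodule.subset_span (Or.inr ⟨A, hA, rfl⟩))

lemma indicatorLinfty_mem_XA_of_finite {A : Set ℕ} (hA : A.Finite) :
    indicatorLinfty A ∈ XA 𝒜 :=
  mem_XA_of_mem_c0Set <| mem_c0Set_of_eq_zero_off_finite hA fun _ hm => if_neg hm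

lemma indicatorLinfty_sub_mem_c0Set {A B : Set ℕ} (h : eqStar A B) :
    indicatorLinfty A - indicatorLinfty B ∈ c0Set := by
  refine mem_c0Set_of_eq_zero_off_finite h fun m hm => ?_
  have hAB : m ∈ A ↔ m ∈ B := by rw [Set.mem_symmDiff] at hm; tauto
  change indicatorLinfty A m - indicatorLinfty B m = 0
  simp [indicatorLinfty_apply, hAB]

lemma indicatorLinfty_union_add_inter (A B : Set ℕ) :
    indicatorLinfty (A ∪ B) + indicatorLinfty (A ∩ B) = indicatorLinfty A + indicatorLinfty B := by
  ext m
  change indicatorLinfty (A ∪ B) m + indicatorLinfty (A ∩ B) m =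
    indicatorLinfty A m + indicatorLinfty B m
  by_cases hA : m ∈ A <;> by_cases hB : m ∈ B <;> simp [indicatorLinfty_apply, hA, hB]

lemma indicatorLinfty_biUnion_mem_XA (had : 𝒜.Pairwise fun A B => (A ∩ B).Finite)
    {a : Finset (Set ℕ)} (ha : ↑a ⊆ 𝒜) : indicatorLinfty (⋃ B ∈ a, B) ∈ XA 𝒜 := by
  induction a using Finset.induction_on with
  | empty => simpa using indicatorLinfty_mem_XA_of_finite (𝒜 := 𝒜) Set.finite_empty
  | insert B a hB ih =>
    rw [Finset.coe_insert, Set.insert_subset_iff] at ha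
    have hfin : (B ∩ ⋃ B' ∈ a, B').Finite := by
      rw [Set.inter_iUnion₂]
      exact a.finite_toSet.biUnion fun B' hB' =>
        had ha.1 (ha.2 hB') fun h => hB (h ▸ hB')
    rw [Finset.set_biUnion_insert,
      eq_sub_of_add_eq (indicatorLinfty_union_add_inter B (⋃ B' ∈ a, B'))]
    exact sub_mem (add_mem (indicatorLinfty_mem_XA_of_mem ha.1) (ih ha.2))
      (indicatorLinfty_mem_XA_of_finite hfin)

lemma indicatorLinfty_mem_XA (had : 𝒜.Pairwise fun A B => (A ∩ B).Finite) {A : Set ℕ}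
    {a : Finset (Set ℕ)} (ha : ↑a ⊆ 𝒜) (hA : eqStar A (⋃ B ∈ a, B)) :
    indicatorLinfty A ∈ XA 𝒜 := by
  simpa using add_mem (mem_XA_of_mem_c0Set (indicatorLinfty_sub_mem_c0Set hA))
    (indicatorLinfty_biUnion_mem_XA had ha)

end ClosedSpan

section SplitVector

variable {𝒜 : Set (Set ℕ)} {p : Set ℕ × Set ℕ} {m : ℕ}

noncomputable def splitVector (p : Set ℕ × Set ℕ) : Linfty :=
  indicatorLinfty p.1 - indicatorLinfty p.2

lemma splitVector_apply_of_mem_fst (hp : p.1 ∩ p.2 = ∅) (hm : m ∈ p.1) :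
    splitVector p m = 1 := by
  have hm' : m ∉ p.2 := fun h => (hp ▸ ⟨hm, h⟩ : m ∈ (∅ : Set ℕ))
  simp [splitVector, indicatorLinfty_apply, hm, hm']

lemma splitVector_apply_of_mem_snd (hp : p.1 ∩ p.2 = ∅) (hm : m ∈ p.2) :
    splitVector p m = -1 := by
  have hm' : m ∉ p.1 := fun h => (hp ▸ ⟨h, hm⟩ : m ∈ (∅ : Set ℕ))
  simp [splitVector, indicatorLinfty_apply, hm, hm']

lemma norm_splitVector (hp : p.1 ∩ p.2 = ∅) (hne : p ≠ (∅, ∅)) : ‖splitVector p‖ = 1 := by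
  refine le_antisymm (Linfty.norm_le_of_forall_abs_apply_le zero_le_one fun m => ?_) ?_
  · change |indicatorLinfty p.1 m - indicatorLinfty p.2 m| ≤ 1
    simp only [indicatorLinfty_apply]
    split_ifs <;> norm_num
  · have hne' : p.1.Nonempty ∨ p.2.Nonempty := by
      contrapose! hne
      exact Prod.ext hne.1 hne.2
    rcases hne' with ⟨m, hm⟩ | ⟨m, hm⟩
    · simpa [splitVector_apply_of_mem_fst hp hm] using (splitVector p).abs_apply_le_norm m
    · simpa [splitVector_apply_of_mem_snd hp hm] using (splitVector p).abs_apply_le_norm m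

lemma splitVector_mem_sphereInf (had : 𝒜.Pairwise fun A B => (A ∩ B).Finite)
    (hp : SplitCond 𝒜 p) (hne : p ≠ (∅, ∅)) : splitVector p ∈ sphereInf 𝒜 := by
  obtain ⟨hdisj, a, b, ha, hb, hA, hB⟩ := hp
  exact ⟨sub_mem (indicatorLinfty_mem_XA had ha hA) (indicatorLinfty_mem_XA had hb hB),
    norm_splitVector hdisj hne⟩

end SplitVector

lemma eqStar_biUnion {ι : Type*} (s : Finset ι) {f g : ι → Set ℕ}
    (h : ∀ i ∈ s, eqStar (f i) (g i)) : eqStar (⋃ i ∈ s, f i) (⋃ i ∈ s, g i) :=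
  (s.finite_toSet.biUnion h).subset <|
    iUnion_symmDiff_iUnion_subset.trans (Set.iUnion_mono fun _ => iUnion_symmDiff_iUnion_subset)

section Centered

variable {𝒜 : Set (Set ℕ)}

lemma splitCond_biUnion (F : Finset (Set ℕ × Set ℕ)) (hF : ∀ p ∈ F, SplitCond 𝒜 p)
    (hdisj : ∀ p ∈ F, ∀ q ∈ F, Disjoint p.1 q.2) :
    SplitCond 𝒜 (⋃ p ∈ F, p.1, ⋃ p ∈ F, p.2) := by
  choose! a b hab using fun p hp => (hF p hp).2
  refine ⟨?_, F.biUnion a, F.biUnion b, ?_, ?_, ?_, ?_⟩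
  · rw [← Set.disjoint_iff_inter_eq_empty]
    simp only [Set.disjoint_iUnion_left, Set.disjoint_iUnion_right]
    exact fun p hp q hq => hdisj q hq p hp
  · simpa [Set.iUnion_subset_iff] using fun p hp => (hab p hp).1
  · simpa [Set.iUnion_subset_iff] using fun p hp => (hab p hp).2.1
  · rw [Finset.set_biUnion_biUnion]
    exact eqStar_biUnion F fun p hp => (hab p hp).2.2.1
  · rw [Finset.set_biUnion_biUnion]
    exact eqStar_biUnion F fun p hp => (hab p hp).2.2.2

lemma splitCentered_of_disjoint {P : Set (Set ℕ × Set ℕ)} (hP : ∀ p ∈ P, SplitCond 𝒜 p)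
    (hdisj : ∀ p ∈ P, ∀ q ∈ P, Disjoint p.1 q.2) : SplitCentered 𝒜 P := fun F hF =>
  ⟨_, splitCond_biUnion F (fun p hp => hP p (hF hp)) (fun p hp q hq => hdisj p (hF hp) q (hF hq)),
    fun _ hp => ⟨Set.subset_biUnion_of_mem hp, Set.subset_biUnion_of_mem hp⟩⟩

end Centered

lemma splitSigmaCentered_of_cover {𝒜 : Set (Set ℕ)}
    (had : 𝒜.Pairwise fun A B => (A ∩ B).Finite) {X : ℕ → Set Linfty}
    (hcover : sphereInf 𝒜 = ⋃ n, X n) (hsmall : ∀ n, ∀ x ∈ X n, ∀ y ∈ X n, ‖x - y‖ < 2) :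
    SplitSigmaCentered 𝒜 := by
  -- `splitVector (∅, ∅) = 0` is off the sphere, so the empty condition joins every piece.
  refine ⟨fun n => {p | SplitCond 𝒜 p ∧ (p = (∅, ∅) ∨ splitVector p ∈ X n)}, ?_, fun n => ?_⟩
  · ext p
    simp only [Set.mem_iUnion, Set.mem_ofPred_eq]
    refine ⟨fun ⟨_, hp, _⟩ => hp, fun hp => ?_⟩
    by_cases hne : p = (∅, ∅)
    · exact ⟨0, hp, Or.inl hne⟩
    · have := hcover ▸ splitVector_mem_sphereInf had hp hne
      obtain ⟨n, hn⟩ := Set.mem_iUnion.1 this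
      exact ⟨n, hp, Or.inr hn⟩
  · refine splitCentered_of_disjoint (fun p hp => hp.1) ?_
    rintro p ⟨hp, hpX⟩ q ⟨hq, hqX⟩
    refine Set.disjoint_left.2 fun m hmp hmq => ?_
    have hpX' : splitVector p ∈ X n := hpX.resolve_left fun h => by simp [h] at hmp
    have hqX' : splitVector q ∈ X n := hqX.resolve_left fun h => by simp [h] at hmq
    have h2 : |(splitVector p - splitVector q) m| = 2 := by
      change |splitVector p m - splitVector q m| = 2
      rw [splitVector_apply_of_mem_fst hp.1 hmp, splitVector_apply_of_mem_snd hq.1 hmq]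
      norm_num
    have := (h2 ▸ Linfty.abs_apply_le_norm _ m).trans_lt (hsmall n _ hpX' _ hqX')
    exact this.false

def SeparatesOff (δ : ℝ) (x : ℕ → ℝ) (p : Set ℕ × Set ℕ) (E : Set ℕ) : Prop :=
  ∀ m ∉ E, (δ < x m → m ∈ p.1) ∧ (x m < -δ → m ∈ p.2)

namespace SeparatesOff

variable {δ η : ℝ} {x z : ℕ → ℝ} {p : Set ℕ × Set ℕ} {E E' : Set ℕ}

lemma mono (h : SeparatesOff δ x p E) (hE : E ⊆ E') : SeparatesOff δ x p E' :=
  fun m hm => h m fun hmE => hm (hE hmE)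

lemma of_abs_sub_le (h : SeparatesOff δ z p E) (hxz : ∀ m ∉ E', |x m - z m| ≤ η) :
    SeparatesOff (δ + η) x p (E ∪ E') := by
  intro m hm
  rw [Set.mem_union, not_or] at hm
  have := abs_le.1 (hxz m hm.2)
  exact ⟨fun _ => (h m hm.1).1 (by linarith), fun _ => (h m hm.1).2 (by linarith)⟩

end SeparatesOff

def overlap (a : Finset (Set ℕ)) : Set ℕ := ⋃ B ∈ a, ⋃ B' ∈ a, ⋃ (_ : B ≠ B'), B ∩ B'

section Separation

variable {𝒜 : Set (Set ℕ)} {a : Finset (Set ℕ)}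

lemma overlap_finite (had : 𝒜.Pairwise fun A B => (A ∩ B).Finite) (ha : ↑a ⊆ 𝒜) :
    (overlap a).Finite :=
  a.finite_toSet.biUnion fun _ hB => a.finite_toSet.biUnion fun _ hB' =>
    Set.finite_iUnion fun hne => had (ha hB) (ha hB') hne

lemma mem_overlap {m : ℕ} {B B' : Set ℕ} (hB : B ∈ a) (hB' : B' ∈ a) (hne : B ≠ B')
    (hmB : m ∈ B) (hmB' : m ∈ B') : m ∈ overlap a := by
  simp only [overlap, Set.mem_iUnion]
  exact ⟨B, hB, B', hB', hne, hmB, hmB'⟩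

lemma exists_mem_eq_of_sum_smul_indicatorLinfty_apply_ne_zero (w : Set ℕ → ℝ) {m : ℕ}
    (hm : m ∉ overlap a) (h : (∑ B ∈ a, w B • indicatorLinfty B) m ≠ 0) :
    ∃ B ∈ a, m ∈ B ∧ (∑ B ∈ a, w B • indicatorLinfty B) m = w B := by
  have happly : (∑ B ∈ a, w B • indicatorLinfty B) m = ∑ B ∈ a, if m ∈ B then w B else 0 := by
    rw [lp.coeFn_sum, Finset.sum_apply]
    refine Finset.sum_congr rfl fun B _ => ?_
    simp [indicatorLinfty_apply]
  rw [happly] at h ⊢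
  obtain ⟨B, hB, hne⟩ := Finset.exists_ne_zero_of_sum_ne_zero h
  have hmB : m ∈ B := by_contra fun hmB => hne (if_neg hmB)
  refine ⟨B, hB, hmB, (Finset.sum_eq_single_of_mem B hB fun B' hB' hne' => ?_).trans (if_pos hmB)⟩
  exact if_neg fun hmB' => hm (mem_overlap hB' hB hne' hmB' hmB)

lemma splitCond_biUnion_diff {b : Finset (Set ℕ)} {E : Set ℕ} (ha : ↑a ⊆ 𝒜) (hb : ↑b ⊆ 𝒜)
    (hE : E.Finite) (hab : (⋃ B ∈ a, B) ∩ (⋃ B ∈ b, B) ⊆ E) :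
    SplitCond 𝒜 ((⋃ B ∈ a, B) \ E, (⋃ B ∈ b, B) \ E) := by
  have hdiff : ∀ U : Set ℕ, eqStar (U \ E) U := fun U =>
    hE.subset fun m hm => by rw [Set.mem_symmDiff, Set.mem_sdiff] at hm; tauto
  refine ⟨?_, a, b, ha, hb, hdiff _, hdiff _⟩
  rw [Set.eq_empty_iff_forall_notMem]
  rintro m ⟨⟨hma, hmE⟩, hmb, -⟩
  exact hmE (hab ⟨hma, hmb⟩)

/- Off `overlap a` the combination equals `w B` on each `B ∈ a` and `0` elsewhere, so its
`δ`-level sets are unions of members of `a`. -/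
lemma exists_separatesOff_sum_smul_indicatorLinfty
    (had : 𝒜.Pairwise fun A B => (A ∩ B).Finite) (ha : ↑a ⊆ 𝒜) (w : Set ℕ → ℝ) {δ : ℝ}
    (hδ : 0 ≤ δ) :
    ∃ p, SplitCond 𝒜 p ∧
      SeparatesOff δ ⇑(∑ B ∈ a, w B • indicatorLinfty B : Linfty) p (overlap a) := by
  refine ⟨_, splitCond_biUnion_diff (a := a.filter (δ < w ·)) (b := a.filter (w · < -δ))
    ((Finset.coe_subset.2 (a.filter_subset _)).trans ha)
    ((Finset.coe_subset.2 (a.filter_subset _)).trans ha) (overlap_finite had ha) ?_, ?_⟩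
  · rintro m ⟨hmF, hmG⟩
    simp only [Set.mem_iUnion, Finset.mem_filter, exists_prop] at hmF hmG
    obtain ⟨B, ⟨hB, hwB⟩, hmB⟩ := hmF
    obtain ⟨B', ⟨hB', hwB'⟩, hmB'⟩ := hmG
    exact mem_overlap hB hB' (by rintro rfl; linarith) hmB hmB'
  · intro m hm
    constructor
    all_goals
      intro hz
      obtain ⟨B, hB, hmB, hzB⟩ :=
        exists_mem_eq_of_sum_smul_indicatorLinfty_apply_ne_zero w hm (by intro h0; linarith)
      rw [hzB] at hz
      refine ⟨?_, hm⟩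
      simp only [Set.mem_iUnion, Finset.mem_filter, exists_prop]
      exact ⟨B, ⟨hB, hz⟩, hmB⟩

end Separation

lemma exists_separatesOff {𝒜 : Set (Set ℕ)} (had : 𝒜.Pairwise fun A B => (A ∩ B).Finite)
    {x : Linfty} (hx : x ∈ XA 𝒜) {δ : ℝ} (hδ : 0 < δ) :
    ∃ p E, SplitCond 𝒜 p ∧ E.Finite ∧ SeparatesOff δ x p E := by
  rw [XA, ← SetLike.mem_coe, Submodule.topologicalClosure_coe] at hx
  obtain ⟨y, hy, hxy⟩ := Metric.mem_closure_iff.1 hx (δ / 4) (by positivity)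
  rw [SetLike.mem_coe, Submodule.span_union, Submodule.mem_sup] at hy
  obtain ⟨c, hc, z, hz, rfl⟩ := hy
  have hc0 : Tendsto (fun m => c m) atTop (nhds 0) :=
    (Submodule.span_le (p := c0Submodule)).2 subset_rfl hc
  have hcfin : {m | ¬|c m| < δ / 4}.Finite := by
    have := Metric.tendsto_nhds.1 hc0 (δ / 4) (by positivity)
    simpa [Real.dist_eq, ← Nat.cofinite_eq_atTop, Filter.eventually_cofinite] using this
  obtain ⟨l, hl, rfl⟩ := (Finsupp.mem_span_image_iff_linearCombination ℝ).1 hz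
  rw [Finsupp.linearCombination_apply, Finsupp.sum] at hxy
  set z : Linfty := ∑ B ∈ l.support, l B • indicatorLinfty B
  have ha : ↑l.support ⊆ 𝒜 := hl
  obtain ⟨p, hp, hsep⟩ :=
    exists_separatesOff_sum_smul_indicatorLinfty had ha l (δ := δ / 2) (by positivity)
  refine ⟨p, _, hp, (overlap_finite had ha).union hcfin, ?_⟩
  have hxz : ∀ m ∉ {m | ¬|c m| < δ / 4}, |x m - z m| ≤ δ / 2 := by
    intro m hm
    rw [Set.mem_ofPred_eq, not_not] at hm
    have hxcz := (x - (c + z)).abs_apply_le_norm m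
    rw [← dist_eq_norm] at hxcz
    change |x m - (c m + z m)| ≤ _ at hxcz
    calc |x m - z m| = |(x m - (c m + z m)) + c m| := by ring_nf
      _ ≤ |x m - (c m + z m)| + |c m| := abs_add_le _ _
      _ ≤ δ / 2 := by linarith
  simpa only [add_halves] using hsep.of_abs_sub_le hxz

lemma exists_nat_cover_of_codes {α D : Type*} [Countable D] {S : Set α} {R : α → α → Prop}
    (code : α → D → Prop) (hex : ∀ x ∈ S, ∃ d, code x d)
    (hR : ∀ x ∈ S, ∀ y ∈ S, ∀ d, code x d → code y d → R x y) :
    ∃ X : ℕ → Set α, S = ⋃ n, X n ∧ ∀ n, ∀ x ∈ X n, ∀ y ∈ X n, R x y := by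
  obtain ⟨e, he⟩ := exists_injective_nat D
  refine ⟨fun n => {x | x ∈ S ∧ ∃ d, e d = n ∧ code x d}, ?_, ?_⟩
  · ext x
    simp only [Set.mem_iUnion, Set.mem_ofPred_eq]
    refine ⟨fun hx => ?_, fun ⟨_, hx, _⟩ => hx⟩
    obtain ⟨d, hd⟩ := hex x hx
    exact ⟨e d, hx, d, rfl, hd⟩
  · rintro n x ⟨hx, d, rfl, hxd⟩ y ⟨hy, d', hd', hyd⟩
    exact hR x hx y hy d hxd (he hd' ▸ hyd)

def IsSplitCode (P : ℕ → Set (Set ℕ × Set ℕ)) (δ : ℝ) (x : Linfty)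
    (d : ℕ × Finset (ℕ × ℚ)) : Prop :=
  (∃ p ∈ P d.1, SeparatesOff δ x p (Prod.fst '' (d.2 : Set (ℕ × ℚ)))) ∧
    ∀ mq ∈ d.2, |x mq.1 - mq.2| ≤ δ / 2

section Codes

variable {𝒜 : Set (Set ℕ)} {P : ℕ → Set (Set ℕ × Set ℕ)} {δ : ℝ}

lemma exists_isSplitCode (had : 𝒜.Pairwise fun A B => (A ∩ B).Finite)
    (hcover : ⋃ n, P n = {p | SplitCond 𝒜 p}) {x : Linfty} (hx : x ∈ XA 𝒜) (hδ : 0 < δ) :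
    ∃ d, IsSplitCode P δ x d := by
  obtain ⟨p, E, hp, hE, hsep⟩ := exists_separatesOff had hx hδ
  obtain ⟨n, hn⟩ := Set.mem_iUnion.1 (hcover ▸ hp : p ∈ ⋃ n, P n)
  choose q hq using fun m => exists_rat_near (x m) (half_pos hδ)
  refine ⟨(n, hE.toFinset.image fun m => (m, q m)), ⟨p, hn, hsep.mono ?_⟩, ?_⟩
  · exact fun m hm => ⟨(m, q m), by simpa using hm, rfl⟩
  · simp only [Finset.mem_image]
    rintro _ ⟨m, -, rfl⟩
    exact (hq m).le

lemma abs_sub_le_of_separatesOff {x y : ℕ → ℝ} {p q : Set ℕ × Set ℕ} {E : Set ℕ} {m : ℕ}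
    (hx : |x m| ≤ 1) (hy : |y m| ≤ 1) (hpx : SeparatesOff δ x p E) (hqy : SeparatesOff δ y q E)
    (hpq : Disjoint p.1 q.2) (hqp : Disjoint q.1 p.2) (hm : m ∉ E) : |x m - y m| ≤ 1 + δ := by
  rw [abs_le] at hx hy ⊢
  constructor
  · by_contra! h
    exact Set.disjoint_left.1 hqp ((hqy m hm).1 (by linarith)) ((hpx m hm).2 (by linarith))
  · by_contra! h
    exact Set.disjoint_left.1 hpq ((hpx m hm).1 (by linarith)) ((hqy m hm).2 (by linarith))

lemma norm_sub_le_of_isSplitCode (hcent : ∀ n, SplitCentered 𝒜 (P n)) {x y : Linfty}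
    (hx : ‖x‖ ≤ 1) (hy : ‖y‖ ≤ 1) {d : ℕ × Finset (ℕ × ℚ)} (hxd : IsSplitCode P δ x d)
    (hyd : IsSplitCode P δ y d) : ‖x - y‖ ≤ 1 + δ := by
  obtain ⟨⟨p, hp, hpx⟩, hxq⟩ := hxd
  obtain ⟨⟨q, hq, hqy⟩, hyq⟩ := hyd
  obtain ⟨r, hr, hext⟩ := hcent d.1 {p, q} (by simp [Set.insert_subset_iff, hp, hq])
  have hrp := hext p (by simp)
  have hrq := hext q (by simp)
  have hr' : Disjoint r.1 r.2 := Set.disjoint_iff_inter_eq_empty.2 hr.1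
  have hcoord : ∀ m, |x m - y m| ≤ 1 + δ := by
    intro m
    by_cases hm : m ∈ Prod.fst '' (d.2 : Set (ℕ × ℚ))
    · obtain ⟨mq, hmq, rfl⟩ := hm
      have := abs_sub_le (x mq.1) mq.2 (y mq.1)
      rw [abs_sub_comm (mq.2 : ℝ)] at this
      linarith [hxq mq hmq, hyq mq hmq]
    · exact abs_sub_le_of_separatesOff ((x.abs_apply_le_norm m).trans hx)
        ((y.abs_apply_le_norm m).trans hy) hpx hqy (hr'.mono hrp.1 hrq.2)
        (hr'.mono hrq.1 hrp.2) hm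
  exact Linfty.norm_le_of_forall_abs_apply_le ((abs_nonneg _).trans (hcoord 0)) hcoord

end Codes

/-- `ℙ_𝒜` is σ-centered iff for every `0 < ε < 1` the unit sphere of
`(X_𝒜, ‖·‖∞)` is a countable union of sets of diameter at most `1+ε`. -/
theorem statement16 (𝒜 : Set (Set ℕ)) (h𝒜 : ADFamily 𝒜) :
    SplitSigmaCentered 𝒜 ↔
      ∀ ε : ℝ, 0 < ε → ε < 1 →
        ∃ X : ℕ → Set Linfty, sphereInf 𝒜 = ⋃ n, X n ∧
          ∀ n, ∀ x ∈ X n, ∀ y ∈ X n, ‖x - y‖ ≤ 1 + ε := by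
  have had : 𝒜.Pairwise fun A B => (A ∩ B).Finite := h𝒜.2.2
  constructor
  · rintro ⟨P, hcover, hcent⟩ ε hε -
    exact exists_nat_cover_of_codes (IsSplitCode P ε)
      (fun x hx => exists_isSplitCode had hcover hx.1 hε)
      fun x hx y hy _ hxd hyd => norm_sub_le_of_isSplitCode hcent hx.2.le hy.2.le hxd hyd
  · intro h
    obtain ⟨X, hcover, hsmall⟩ := h (1 / 2) (by norm_num) (by norm_num)
    exact splitSigmaCentered_of_cover had hcover fun n x hx y hy =>
      (hsmall n x hx y hy).trans_lt (by norm_num)
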